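/- arXiv:1806.00496 — 5 statements merged into one kernel-verified Lean document; each statement's English description precedes it below -/
import Mathlib

section
/- Let 𝔹 = GF(q), 𝔽' = GF(q^{ℓ'}), 𝔼 = GF(q^a), and 𝔽 = GF(q^{aℓ'}), where a and ℓ' are relatively prime and q is a prime power. View 𝔽' and 𝔼 as subfields of 𝔽. Then for any finite set {γ₁, γ₂, ..., γ_m} of elements of 𝔽', the rank of {γ₁, ..., γ_m} over 𝔼 (i.e., the dimension of its 𝔼-span in 𝔽) equals the rank of {γ₁, ..., γ_m} over 𝔹 (the dimension of its 𝔹-span in 𝔽'). -/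
/-!
Since `[𝔽' : 𝔹] = ℓ'` and `[𝔼 : 𝔹] = a` are coprime, `𝔽'` and `𝔼` are linearly disjoint over `𝔹`
inside `𝔽`. Hence a `𝔹`-basis of the `𝔹`-span of the `γᵢ` stays linearly independent over `𝔼`,
and it spans their `𝔼`-span.
-/

open Module Submodule

theorem Submodule.span_image_span_of_tower {R S M N : Type*} [CommSemiring R] [Semiring S]
    [AddCommMonoid M] [AddCommMonoid N] [Module R M] [Module R N] [Algebra R S] [Module S N]
    [IsScalarTower R S N] (f : M →ₗ[R] N) (s : Set M) :
    span S (f '' span R s) = span S (f '' s) := by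
  rw [← map_coe, map_span, span_span_of_tower]

theorem Module.finrank_eq_of_card_eq_pow {K V : Type*} [Field K] [AddCommGroup V] [Module K V]
    [Fintype K] [Fintype V] {q n : ℕ} (hq : 2 ≤ q) (hK : Fintype.card K = q)
    (hV : Fintype.card V = q ^ n) : finrank K V = n :=
  Nat.pow_right_injective hq <| show q ^ _ = q ^ n by
    rw [← hV, ← hK, card_eq_pow_finrank (K := K) (V := V)]

namespace IntermediateField.LinearDisjoint

variable {F E L : Type*} [Field F] [Field E] [Field L] [Algebra F E] [Algebra F L] [Algebra L E]
  [IsScalarTower F L E] {A : IntermediateField F E}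

theorem rank_span_image (H : A.LinearDisjoint L) (s : Set A) :
    Module.rank L (span L (A.val '' s)) = Module.rank F (span F s) := by
  set V := span F s
  let b := Basis.ofVectorSpace F V
  have hb : LinearIndependent F (V.subtype ∘ b) :=
    b.linearIndependent.map' V.subtype V.ker_subtype
  have hspan : span F (Set.range (V.subtype ∘ b)) = V := by
    rw [Set.range_comp, ← map_span, b.span_eq, Submodule.map_top, range_subtype]
  have hL : span L (A.val '' s) = span L (Set.range (A.val ∘ V.subtype ∘ b)) := by
    rw [Set.range_comp, ← AlgHom.coe_toLinearMap,
      ← span_image_span_of_tower (R := F) A.val.toLinearMap (Set.range _), hspan,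
      span_image_span_of_tower]
  have hbL := H.linearIndependent_left hb
  rw [hL, rank_span hbL, Cardinal.mk_range_eq _ hbL.injective, b.mk_eq_rank'']

theorem finrank_span_image (H : A.LinearDisjoint L) (s : Set A) :
    finrank L (span L (A.val '' s)) = finrank F (span F s) :=
  congrArg Cardinal.toNat (H.rank_span_image s)

end IntermediateField.LinearDisjoint

theorem stmt2_general (q a ℓ' m : ℕ) (hq : IsPrimePow q) (hgcd : Nat.Coprime a ℓ')
    (B E F' F : Type*) [Field B] [Field E] [Field F'] [Field F]
    [Algebra B E] [Algebra B F'] [Algebra B F] [Algebra E F] [Algebra F' F]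
    [IsScalarTower B E F] [IsScalarTower B F' F]
    [Fintype B] [Fintype E] [Fintype F']
    (hB : Fintype.card B = q) (hE : Fintype.card E = q ^ a)
    (hF' : Fintype.card F' = q ^ ℓ')
    (γ : Fin m → F') :
    Module.finrank E (Submodule.span E (Set.range fun i => algebraMap F' F (γ i))) =
      Module.finrank B (Submodule.span B (Set.range γ)) := by
  let f := IsScalarTower.toAlgHom B F' F
  let φ : F' ≃ₐ[B] f.fieldRange := AlgEquiv.ofInjectiveField f
  have hdisj : f.fieldRange.LinearDisjoint E := by
    apply IntermediateField.LinearDisjoint.of_finrank_coprime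
    rwa [← φ.toLinearEquiv.finrank_eq, finrank_eq_of_card_eq_pow hq.two_le hB hF',
      finrank_eq_of_card_eq_pow hq.two_le hB hE, Nat.coprime_comm]
  have himage : f.fieldRange.val '' Set.range (φ ∘ γ) =
      Set.range fun i => algebraMap F' F (γ i) := by
    rw [← Set.range_comp]; rfl
  have hspan : span B (Set.range (φ ∘ γ)) =
      (span B (Set.range γ)).map (φ.toLinearEquiv : F' →ₗ[B] f.fieldRange) := by
    rw [map_span, Set.range_comp]; rfl
  rw [← himage, hdisj.finrank_span_image, hspan, LinearEquiv.finrank_map_eq]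

/-- with `𝔹 = GF(q) ≤ 𝔽' = GF(q^ℓ') ≤ 𝔽 = GF(q^{aℓ'})` and
`𝔼 = GF(q^a) ≤ 𝔽`, `gcd(a, ℓ') = 1`, the rank over `𝔼` of a finite subset of `𝔽'`
(inside `𝔽`) equals its rank over `𝔹`. -/
theorem stmt2 (q a ℓ' m : ℕ) (hq : IsPrimePow q) (hgcd : Nat.Coprime a ℓ')
    (B E F' F : Type*) [Field B] [Field E] [Field F'] [Field F]
    [Algebra B E] [Algebra B F'] [Algebra B F] [Algebra E F] [Algebra F' F]
    [IsScalarTower B E F] [IsScalarTower B F' F]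
    [Fintype B] [Fintype E] [Fintype F'] [Fintype F]
    (hB : Fintype.card B = q) (hE : Fintype.card E = q ^ a)
    (hF' : Fintype.card F' = q ^ ℓ') (hF : Fintype.card F = q ^ (a * ℓ'))
    (γ : Fin m → F') :
    Module.finrank E (Submodule.span E (Set.range fun i => algebraMap F' F (γ i))) =
      Module.finrank B (Submodule.span B (Set.range γ)) :=
  stmt2_general q a ℓ' m hq hgcd B E F' F hB hE hF' γ
end

section
/- Let 𝔹 = GF(q), 𝔽' = GF(q^{ℓ'}), 𝔽 = GF(q^{aℓ'}) with gcd(a, ℓ') = 1, and suppose β ∈ 𝔽 generates 𝔽 over 𝔹 with {1, β, β², ..., β^{ℓ'-1}} a basis of 𝔽' over 𝔹. Then {1, β, β², ..., β^{ℓ'-1}} is also a basis of 𝔽 over 𝔼 = GF(q^a). -/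
/-- if `{1, β, …, β^{ℓ'-1}}` is a basis of `𝔽' = GF(q^ℓ')` over
`𝔹 = GF(q)` and `β` generates `𝔽 = GF(q^{aℓ'})` over `𝔹`, `gcd(a,ℓ') = 1`, then
`{1, β, …, β^{ℓ'-1}}` is also a basis of `𝔽` over `𝔼 = GF(q^a)`. -/
theorem stmt3 (q a ℓ' : ℕ) (hq : IsPrimePow q) (hgcd : Nat.Coprime a ℓ')
    (B E F' F : Type*) [Field B] [Field E] [Field F'] [Field F]
    [Algebra B E] [Algebra B F'] [Algebra B F] [Algebra E F] [Algebra F' F]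
    [IsScalarTower B E F] [IsScalarTower B F' F]
    [Fintype B] [Fintype E] [Fintype F'] [Fintype F]
    (hB : Fintype.card B = q) (hE : Fintype.card E = q ^ a)
    (hF' : Fintype.card F' = q ^ ℓ') (hF : Fintype.card F = q ^ (a * ℓ'))
    (β : F') (bB : Module.Basis (Fin ℓ') B F') (hbB : ∀ i, bB i = β ^ (i : ℕ))
    (hgen : Algebra.adjoin B {algebraMap F' F β} = ⊤) :
    ∃ bE : Module.Basis (Fin ℓ') E F, ∀ i, bE i = algebraMap F' F β ^ (i : ℕ) := by
  set x : F := algebraMap F' F β with hx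
  have hq1 : 1 < q := hq.one_lt
  -- finrank E F = ℓ'
  have ha : 0 < a := by
    by_contra h
    have : a = 0 := by omega
    rw [this, pow_zero] at hE
    exact absurd hE (Fintype.one_lt_card (α := E)).ne'
  have hfr : Module.finrank E F = ℓ' := by
    have h := Module.card_eq_pow_finrank (K := E) (V := F)
    rw [hF, hE, ← pow_mul] at h
    have h2 := Nat.pow_right_injective hq1 h
    exact (Nat.eq_of_mul_eq_mul_left ha h2).symm
  -- adjoin E {x} = ⊤ as subalgebra
  have hadj : Algebra.adjoin E {x} = ⊤ := by
    rw [eq_top_iff]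
    intro y _
    have hy : y ∈ Algebra.adjoin B {x} := hgen ▸ Algebra.mem_top
    have hxmem : x ∈ (Algebra.adjoin E {x}).restrictScalars B := by
      rw [Subalgebra.mem_restrictScalars]
      exact Algebra.subset_adjoin rfl
    have hle : Algebra.adjoin B {x} ≤ (Algebra.adjoin E {x}).restrictScalars B :=
      Algebra.adjoin_le (Set.singleton_subset_iff.mpr hxmem)
    exact hle hy
  have hint : IsIntegral E x := Algebra.IsIntegral.isIntegral x
  -- IntermediateField adjoin = ⊤
  have hadjF : IntermediateField.adjoin E {x} = ⊤ := by
    rw [eq_top_iff]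
    intro y _
    exact IntermediateField.algebra_adjoin_le_adjoin E {x} (hadj ▸ Algebra.mem_top)
  have hdeg : (minpoly E x).natDegree = ℓ' := by
    have h1 := IntermediateField.adjoin.finrank hint
    rw [hadjF, IntermediateField.finrank_top', hfr] at h1
    exact h1.symm
  have hli : LinearIndependent E fun i : Fin ℓ' => x ^ (i : ℕ) := by
    have := linearIndependent_pow (K := E) x
    rwa [hdeg] at this
  have hl : 0 < ℓ' := by
    by_contra h
    have : ℓ' = 0 := by omega
    rw [this, pow_zero] at hF'
    exact absurd hF' (Fintype.one_lt_card (α := F')).ne'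
  haveI : Nonempty (Fin ℓ') := ⟨⟨0, hl⟩⟩
  refine ⟨basisOfLinearIndependentOfCardEqFinrank hli (by simp [hfr]), fun i => ?_⟩
  simp [coe_basisOfLinearIndependentOfCardEqFinrank]
end

section
/- Let 𝔹 = GF(q), 𝔽' = GF(q^{ℓ'}), 𝔽 = GF(q^{aℓ'}), and let {β₁, ..., β_a} be a basis for 𝔽 over 𝔽'. Define the 𝔹-subspace 𝔼 = span_𝔹{β₁, ..., β_a} of 𝔽. Then for any finite set {γ₁, ..., γ_m} ⊆ 𝔽', the rank of {γ₁, ..., γ_m} over 𝔼 (the maximal cardinality of a subset of {γ₁,...,γ_m} that is 𝔼-independent, meaning no nontrivial combination Σ bᵢγᵢ = 0 with bᵢ ∈ 𝔼) equals the rank of {γ₁, ..., γ_m} over 𝔹 (the dimension of the 𝔹-span). -/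
/-- with `𝔹 = GF(q) ≤ 𝔽' = GF(q^ℓ') ≤ 𝔽 = GF(q^{aℓ'})` and
`𝔼 = span_𝔹{β₁,…,β_a}` for an `𝔽'`-basis `{βᵢ}` of `𝔽` (a and ℓ' arbitrary),
the rank over `𝔼` (max size of an `𝔼`-independent index subset) of a finite
family in `𝔽'` equals its rank over `𝔹`. -/
theorem stmt5 (q a ℓ' m : ℕ) (hq : IsPrimePow q)
    (B F' F : Type*) [Field B] [Field F'] [Field F]
    [Algebra B F'] [Algebra B F] [Algebra F' F] [IsScalarTower B F' F]
    [Fintype B] [Fintype F'] [Fintype F]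
    (hB : Fintype.card B = q) (hF' : Fintype.card F' = q ^ ℓ')
    (hF : Fintype.card F = q ^ (a * ℓ'))
    (β : Module.Basis (Fin a) F' F)
    (E : Submodule B F) (hE : E = Submodule.span B (Set.range fun i => β i))
    (γ : Fin m → F') :
    IsGreatest {n : ℕ | ∃ T : Finset (Fin m), T.card = n ∧
        ∀ c : Fin m → F, (∀ i, c i ∈ E) →
          (∑ i ∈ T, c i * algebraMap F' F (γ i)) = 0 → ∀ i ∈ T, c i = 0}
      (Module.finrank B (Submodule.span B (Set.range γ))) := by
  classical
  have ha : a ≠ 0 := by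
    intro h
    have h2 : 1 < Fintype.card F := Fintype.one_lt_card
    rw [hF, h, zero_mul, pow_zero] at h2
    exact lt_irrefl 1 h2
  have i0 : Fin a := ⟨0, Nat.pos_of_ne_zero ha⟩
  -- key equivalence
  have key : ∀ T : Finset (Fin m),
      (∀ c : Fin m → F, (∀ i, c i ∈ E) →
        (∑ i ∈ T, c i * algebraMap F' F (γ i)) = 0 → ∀ i ∈ T, c i = 0)
      ↔ LinearIndependent B (fun i : T => γ i) := by
    intro T
    constructor
    · intro h
      rw [Fintype.linearIndependent_iff]
      intro g hg j
      set c : Fin m → F := fun i => if h : i ∈ T then g ⟨i, h⟩ • β i0 else 0 with hc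
      have hcE : ∀ i, c i ∈ E := by
        intro i
        simp only [hc]
        split
        · exact Submodule.smul_mem _ _ (hE ▸ Submodule.subset_span (Set.mem_range_self i0))
        · exact Submodule.zero_mem _
      have hsum : (∑ i ∈ T, c i * algebraMap F' F (γ i)) = 0 := by
        have h1 : ∀ i ∈ T, c i * algebraMap F' F (γ i)
            = algebraMap F' F (γ i) * c i := fun i _ => mul_comm _ _
        calc (∑ i ∈ T, c i * algebraMap F' F (γ i))
            = ∑ i ∈ T.attach, c i.1 * algebraMap F' F (γ i.1) := (T.sum_attach _).symm
          _ = ∑ i ∈ T.attach, (g i • γ i.1) • β i0 := by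
              refine Finset.sum_congr rfl fun i _ => ?_
              simp only [hc, dif_pos i.2]
              rw [smul_mul_assoc, mul_comm, ← Algebra.smul_def, smul_assoc]
          _ = (∑ i ∈ T.attach, g i • γ i.1) • β i0 := by rw [Finset.sum_smul]
          _ = 0 := by
              have : (∑ i ∈ T.attach, g i • γ i.1) = ∑ i : {x // x ∈ T}, g i • γ i.1 := rfl
              rw [this, hg, zero_smul]
      have := h c hcE hsum j.1 j.2
      simp only [hc, dif_pos j.2] at this
      rcases smul_eq_zero.mp this with h0 | h0
      · exact h0
      · exact absurd h0 (β.ne_zero i0)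
    · intro hLI c hcE hsum i hi
      rw [hE] at hcE
      have hb : ∀ i, ∃ b : Fin a → B, (∑ j, b j • β j) = c i := by
        intro i
        exact (Submodule.mem_span_range_iff_exists_fun B).mp (hcE i)
      choose b hbc using hb
      have hterm : ∀ i ∈ T, c i * algebraMap F' F (γ i)
          = ∑ j, (b i j • γ i) • β j := by
        intro i _
        rw [← hbc i, Finset.sum_mul]
        refine Finset.sum_congr rfl fun j _ => ?_
        rw [smul_mul_assoc, mul_comm, ← Algebra.smul_def, ← smul_assoc]
      rw [Finset.sum_congr rfl hterm, Finset.sum_comm] at hsum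
      have hcoef : ∀ j, (∑ i ∈ T, b i j • γ i) = 0 := by
        have := Fintype.linearIndependent_iff.mp β.linearIndependent
          (fun j => ∑ i ∈ T, b i j • γ i) ?_
        · exact this
        · rw [← hsum]
          exact Finset.sum_congr rfl fun j _ => Finset.sum_smul
      have hbz : ∀ j, ∀ i ∈ T, b i j = 0 := by
        intro j
        have h0 : (∑ i ∈ T.attach, b i.1 j • γ i.1) = 0 := by
          rw [T.sum_attach (fun i => b i j • γ i)]; exact hcoef j
        intro i hi'
        exact Fintype.linearIndependent_iff.mp hLI (fun i => b i.1 j) h0 ⟨i, hi'⟩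
      rw [← hbc i]
      exact Finset.sum_eq_zero fun j _ => by rw [hbz j i hi, zero_smul]
  have : Module.Finite B F' := Module.Finite.of_finite
  constructor
  · -- membership
    obtain ⟨s, hs_sub, hs_span, hs_li⟩ := exists_linearIndependent B (Set.range γ)
    have hfin : s.Finite := (Set.finite_range γ).subset hs_sub
    set sf := hfin.toFinset with hsf
    have hx : ∀ x ∈ sf, ∃ i, γ i = x := fun x hx =>
      hs_sub (hfin.mem_toFinset.mp hx)
    set f : {x // x ∈ sf} → Fin m := fun x => (hx x.1 x.2).choose with hf
    have hγf : ∀ x : {x // x ∈ sf}, γ (f x) = x.1 := fun x => (hx x.1 x.2).choose_spec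
    have finj : Function.Injective f := by
      intro x y hxy
      apply Subtype.ext
      rw [← hγf x, ← hγf y, hxy]
    refine ⟨sf.attach.image f, ?_, ?_⟩
    · rw [Finset.card_image_of_injective _ finj, Finset.card_attach]
      haveI : Fintype s := hfin.fintype
      rw [← hs_span, finrank_span_set_eq_card hs_li, hsf, hfin.toFinset_eq_toFinset]
    · rw [key]
      set T := sf.attach.image f with hT
      have hmem : ∀ i : T, γ i.1 ∈ s := by
        rintro ⟨i, hi⟩
        obtain ⟨x, -, rfl⟩ := Finset.mem_image.mp hi
        rw [hγf x]
        exact hfin.mem_toFinset.mp x.2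
      set e : T → s := fun i => ⟨γ i.1, hmem i⟩ with he
      have einj : Function.Injective e := by
        rintro ⟨i, hi⟩ ⟨i', hi'⟩ hee
        obtain ⟨x, -, rfl⟩ := Finset.mem_image.mp hi
        obtain ⟨x', -, rfl⟩ := Finset.mem_image.mp hi'
        have : γ (f x) = γ (f x') := congrArg Subtype.val hee
        rw [hγf x, hγf x'] at this
        exact Subtype.ext (congrArg f (Subtype.ext this))
      exact hs_li.comp e einj
  · -- upper bound
    rintro n ⟨T, rfl, hP⟩
    have hLI := (key T).mp hP
    set S := Submodule.span B (Set.range γ) with hS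
    set w : T → S := fun i => ⟨γ i.1, Submodule.subset_span (Set.mem_range_self i.1)⟩ with hw
    have hwLI : LinearIndependent B w := by
      apply LinearIndependent.of_comp S.subtype
      exact hLI
    have := hwLI.fintype_card_le_finrank
    rwa [Fintype.card_coe] at this
end

section
/- Let 𝔼 = GF(q^a), 𝔹 = GF(q), and let {ξ₁,...,ξ_a} be a basis of 𝔼 over 𝔹. Fix α* ∈ 𝔼. For the polynomial p_j(x) = tr_{𝔼/𝔹}(ξ_j(x - α*)) / (x - α*) for j ∈ [a] (interpreted as the polynomial of degree q^{a-1} - 1 obtained by dividing the linearized polynomial Σ_{i=0}^{a-1} (ξ_j)^{q^i}(x - α*)^{q^i} by its root factor (x - α*)), we have: (1) p_j(α*) = ξ_j, so {p₁(α*), ..., p_a(α*)} has rank a over 𝔹; and (2) for any x ∈ 𝔼 with x ≠ α*, rank_𝔹({p₁(x), ..., p_a(x)}) = 1. -/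
open Polynomial

private theorem helper1 (q a : ℕ) (E : Type*) [Field E] (ξj αs : E) (hq : 2 ≤ q) (ha : 1 ≤ a)
    (p : Polynomial E)
    (hp : (X - C αs) * p = ∑ i ∈ Finset.range a, (C ξj * (X - C αs)) ^ q ^ i) :
    p.eval αs = ξj := by
  have key : p = C ξj + ∑ i ∈ Finset.range (a-1),
      C ξj ^ q ^ (i+1) * (X - C αs) ^ (q ^ (i+1) - 1) := by
    apply mul_left_cancel₀ (X_sub_C_ne_zero αs)
    rw [hp]
    obtain ⟨b, rfl⟩ : ∃ b, a = b + 1 := ⟨a - 1, by omega⟩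
    rw [Finset.sum_range_succ']
    simp only [Nat.add_sub_cancel]
    rw [mul_add, Finset.mul_sum]
    rw [add_comm ((X - C αs) * C ξj)]
    congr 1
    · apply Finset.sum_congr rfl
      intro i _
      have h1 : q ^ (i+1) - 1 + 1 = q ^ (i+1) :=
        Nat.succ_pred_eq_of_pos (pow_pos (by omega) _)
      have h2 : (X - C αs)^(q^(i+1)) = (X - C αs) * (X - C αs)^(q^(i+1)-1) := by
        conv_lhs => rw [← h1]
        rw [pow_succ']
      rw [mul_pow, h2]
      ring
    · rw [pow_zero, pow_one, mul_comm]
  rw [key]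
  have hz : ∀ i : ℕ, (0:E) ^ (q ^ (i+1) - 1) = 0 := fun i =>
    zero_pow (by have := Nat.one_lt_pow (n := i+1) (by omega) hq; omega)
  rw [eval_add, eval_C, eval_finset_sum]
  have : ∀ i ∈ Finset.range (a-1),
      eval αs (C ξj ^ q ^ (i+1) * (X - C αs) ^ (q ^ (i+1) - 1)) = 0 := by
    intro i _
    simp [hz i]
  rw [Finset.sum_congr rfl this]
  simp

private theorem helper3 (q : ℕ) (B E : Type*) [Field B] [Field E] [Algebra B E]
    [Fintype B] (hB : Fintype.card B = q) (y z : E) :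
    (y + z) ^ q = y ^ q + z ^ q := by
  haveI : Fact (ringChar B).Prime := ⟨CharP.char_is_prime B (ringChar B)⟩
  haveI : CharP E (ringChar B) :=
    charP_of_injective_algebraMap (algebraMap B E).injective (ringChar B)
  obtain ⟨n, hn⟩ := FiniteField.card B (ringChar B)
  rw [hB] at hn
  rw [hn.2, add_pow_char_pow]

private theorem helper2 (q : ℕ) (B E : Type*) [Field B] [Field E] [Algebra B E]
    [Fintype B] (hB : Fintype.card B = q) (y : E) (hy : y ^ q = y) :
    ∃ b : B, algebraMap B E b = y := by
  have hq : 2 ≤ q := hB ▸ Fintype.one_lt_card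
  classical
  by_contra hc
  push_neg at hc
  set S : Finset E := Finset.univ.image (algebraMap B E) with hS
  have hyS : y ∉ S := by
    simp only [hS, Finset.mem_image]
    rintro ⟨b, -, hb⟩; exact hc b hb
  have hcardS : S.card = q := by
    rw [hS, Finset.card_image_of_injective _ (algebraMap B E).injective,
      Finset.card_univ, hB]
  have hroots : ∀ z ∈ insert y S, eval z ((X:E[X])^q - X) = 0 := by
    intro z hz
    rcases Finset.mem_insert.mp hz with rfl | hz
    · simp [hy]
    · simp only [hS, Finset.mem_image] at hz
      obtain ⟨b, -, rfl⟩ := hz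
      have : b ^ Fintype.card B = b := FiniteField.pow_card b
      simp [← map_pow, hB ▸ this]
  have hzero : ((X:E[X])^q - X) = 0 := by
    apply eq_zero_of_natDegree_lt_card_of_eval_eq_zero' _ _ hroots
    rw [Finset.card_insert_of_notMem hyS, hcardS]
    calc natDegree ((X:E[X])^q - X) ≤ max (natDegree ((X:E[X])^q)) (natDegree (X:E[X])) :=
          natDegree_sub_le _ _
      _ ≤ q := by simp [natDegree_X_pow]; omega
      _ < q + 1 := Nat.lt_succ_self _
  have : ((X:E[X])^q - X).coeff q = 1 := by
    rw [coeff_sub, coeff_X_pow, coeff_X]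
    simp; omega
  rw [hzero] at this
  simp at this

/-- for `p_j(x) = tr_{𝔼/𝔹}(ξ_j (x - α*)) / (x - α*)` (the
polynomial quotient of the linearized trace polynomial by its root factor):
`p_j(α*) = ξ_j` so `{p_j(α*)}` has full rank `a` over `𝔹`, while for any
`x ≠ α*` the values `{p_j(x)}` span a `𝔹`-subspace of dimension `1`. -/
theorem stmt11 (q a : ℕ) (B E : Type*) [Field B] [Field E] [Algebra B E]
    [Fintype B] [Fintype E] (hB : Fintype.card B = q) (hE : Fintype.card E = q ^ a)
    (ξ : Module.Basis (Fin a) B E) (αs : E)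
    (p : Fin a → Polynomial E)
    (hp : ∀ j, (Polynomial.X - Polynomial.C αs) * p j =
      ∑ i ∈ Finset.range a,
        (Polynomial.C (ξ j) * (Polynomial.X - Polynomial.C αs)) ^ q ^ i) :
    (∀ j, (p j).eval αs = ξ j) ∧
    Module.finrank B (Submodule.span B (Set.range fun j => (p j).eval αs)) = a ∧
    ∀ x : E, x ≠ αs →
      Module.finrank B (Submodule.span B (Set.range fun j => (p j).eval x)) = 1 := by
  have hq : 2 ≤ q := hB ▸ Fintype.one_lt_card
  have ha : 1 ≤ a := by
    by_contra h
    have ha0 : a = 0 := by omega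
    have h2 := Fintype.one_lt_card (α := E)
    rw [hE, ha0, pow_zero] at h2
    omega
  haveI : FiniteDimensional B E := Module.Finite.of_basis ξ
  have h1 : ∀ j, (p j).eval αs = ξ j := fun j => helper1 q a E (ξ j) αs hq ha (p j) (hp j)
  refine ⟨h1, ?_, ?_⟩
  · rw [show (Set.range fun j => (p j).eval αs) = Set.range ξ from by
      rw [show (fun j => (p j).eval αs) = ⇑ξ from funext h1]]
    rw [ξ.span_eq, finrank_top, Module.finrank_eq_card_basis ξ, Fintype.card_fin]
  · intro x hx
    classical
    set u := x - αs with hu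
    have hu0 : u ≠ 0 := sub_ne_zero.mpr hx
    set c : Fin a → E := fun j => ∑ i ∈ Finset.range a, (ξ j * u) ^ q ^ i with hc
    have hev : ∀ j, (p j).eval x = c j * u⁻¹ := by
      intro j
      have h0 := congrArg (Polynomial.eval x) (hp j)
      simp only [eval_mul, eval_sub, eval_X, eval_C, eval_finset_sum, eval_pow] at h0
      rw [← hu] at h0
      rw [hc]
      simp only []
      rw [← h0, mul_comm u, mul_assoc, mul_inv_cancel₀ hu0, mul_one]
    let φ : E →+* E :=
      { toFun := fun y => y ^ q
        map_one' := one_pow q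
        map_mul' := fun y z => mul_pow y z q
        map_zero' := zero_pow (by omega)
        map_add' := fun y z => helper3 q B E hB y z }
    have hfix : ∀ j, (c j) ^ q = c j := by
      intro j
      show φ (c j) = c j
      rw [hc]
      simp only []
      rw [map_sum]
      have hstep : ∀ i, φ ((ξ j * u) ^ q ^ i) = (ξ j * u) ^ q ^ (i+1) := by
        intro i
        show ((ξ j * u) ^ q ^ i) ^ q = _
        rw [← pow_mul, ← pow_succ]
      rw [Finset.sum_congr rfl (fun i _ => hstep i)]
      have hper : (ξ j * u) ^ q ^ a = (ξ j * u) ^ q ^ 0 := by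
        rw [pow_zero, pow_one, ← hE, FiniteField.pow_card]
      have e1 := Finset.sum_range_succ' (fun i => (ξ j * u) ^ q ^ i) a
      have e2 := Finset.sum_range_succ (fun i => (ξ j * u) ^ q ^ i) a
      have h3 : (∑ i ∈ Finset.range a, (ξ j * u) ^ q ^ (i+1)) + (ξ j * u) ^ q ^ 0
          = (∑ i ∈ Finset.range a, (ξ j * u) ^ q ^ i) + (ξ j * u) ^ q ^ 0 := by
        rw [← e1, e2, hper]
      exact add_right_cancel h3
    choose b hb using fun j => helper2 q B E hB (c j) (hfix j)
    have hle : Submodule.span B (Set.range fun j => (p j).eval x)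
        ≤ Submodule.span B {u⁻¹} := by
      rw [Submodule.span_le]
      rintro _ ⟨j, rfl⟩
      show (p j).eval x ∈ Submodule.span B {u⁻¹}
      rw [hev j, ← hb j, ← Algebra.smul_def]
      exact Submodule.smul_mem _ _ (Submodule.mem_span_singleton_self _)
    -- linear maps ψ i : y ↦ y ^ q ^ i
    have hqpow_add : ∀ (i : ℕ) (y z : E), (y + z) ^ q ^ i = y ^ q ^ i + z ^ q ^ i := by
      intro i
      induction i with
      | zero => intro y z; simp
      | succ i ih =>
        intro y z
        rw [pow_succ, pow_mul, pow_mul, pow_mul, ih, helper3 q B E hB]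
    have hqpow_smul : ∀ (i : ℕ) (r : B) (y : E), (r • y) ^ q ^ i = r • (y ^ q ^ i) := by
      intro i r y
      rw [Algebra.smul_def, Algebra.smul_def, mul_pow, ← map_pow]
      have : r ^ q ^ i = r := by rw [← hB]; exact FiniteField.pow_card_pow i r
      rw [this]
    let ψ : ℕ → E →ₗ[B] E := fun i =>
      { toFun := fun y => y ^ q ^ i
        map_add' := hqpow_add i
        map_smul' := fun r y => hqpow_smul i r y }
    let T : E →ₗ[B] E := ∑ i ∈ Finset.range a, ψ i
    have hT : ∀ y : E, T y = ∑ i ∈ Finset.range a, y ^ q ^ i := by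
      intro y
      rw [LinearMap.sum_apply]
      rfl
    have hex : ∃ j, c j ≠ 0 := by
      by_contra hno
      push_neg at hno
      have hT0 : ∀ y : E, T y = 0 := by
        intro y
        have hy : y = ∑ j, ξ.repr (y * u⁻¹) j • (ξ j * u) := by
          have hrep := Module.Basis.sum_repr ξ (y * u⁻¹)
          calc y = (y * u⁻¹) * u := by field_simp
            _ = (∑ j, ξ.repr (y * u⁻¹) j • ξ j) * u := by rw [hrep]
            _ = ∑ j, ξ.repr (y * u⁻¹) j • (ξ j * u) := by
                rw [Finset.sum_mul]
                exact Finset.sum_congr rfl fun j _ => smul_mul_assoc _ _ _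
        rw [hy, map_sum]
        apply Finset.sum_eq_zero
        intro j _
        rw [map_smul]
        have : T (ξ j * u) = c j := hT (ξ j * u)
        rw [this, hno j, smul_zero]
      have hpoly : (∑ i ∈ Finset.range a, (X:E[X]) ^ q ^ i) = 0 := by
        have hd1 : natDegree (∑ i ∈ Finset.range a, (X:E[X]) ^ q ^ i) ≤ q ^ (a-1) := by
          apply Polynomial.natDegree_sum_le_of_forall_le
          intro i hi
          rw [natDegree_X_pow]
          exact Nat.pow_le_pow_right (by omega)
            (by simp only [Finset.mem_range] at hi; omega)
        have hd2 : q ^ (a-1) < q ^ a := by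
          apply Nat.pow_lt_pow_right <;> omega
        apply eq_zero_of_natDegree_lt_card_of_eval_eq_zero _ Function.injective_id
        · intro y
          have h5 := hT0 y
          rw [hT] at h5
          simp only [eval_finset_sum, eval_pow, eval_X]
          exact h5
        · rw [hE]
          exact lt_of_le_of_lt hd1 hd2
      have hco : (∑ i ∈ Finset.range a, (X:E[X]) ^ q ^ i).coeff 1 = 1 := by
        rw [finset_sum_coeff]
        rw [Finset.sum_eq_single 0]
        · simp
        · intro i hi hi0
          rw [coeff_X_pow]
          have : q ^ i ≠ 1 := by
            have : q ≤ q ^ i := Nat.le_self_pow hi0 q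
            omega
          simp [Ne.symm this]
        · intro h
          exact absurd (Finset.mem_range.mpr (by omega)) h
      rw [hpoly] at hco
      simp at hco
    obtain ⟨j, hj⟩ := hex
    have hne : (p j).eval x ≠ 0 := by
      rw [hev j]
      exact mul_ne_zero hj (inv_ne_zero hu0)
    apply le_antisymm
    · calc Module.finrank B (Submodule.span B (Set.range fun j => (p j).eval x))
          ≤ Module.finrank B (Submodule.span B {u⁻¹}) := Submodule.finrank_mono hle
        _ = 1 := finrank_span_singleton (inv_ne_zero hu0)
    · have hsub : Submodule.span B {(p j).eval x}
          ≤ Submodule.span B (Set.range fun j => (p j).eval x) :=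
        Submodule.span_mono (Set.singleton_subset_iff.mpr ⟨j, rfl⟩)
      calc (1:ℕ) = Module.finrank B (Submodule.span B {(p j).eval x}) :=
            (finrank_span_singleton hne).symm
        _ ≤ _ := Submodule.finrank_mono hsub
end

section
/- Let 𝔼 = GF(q^a), 𝔹 = GF(q), let {ξ₁,...,ξ_a} be a basis of 𝔼 over 𝔹, let W = {w₀ = 0, w₁, ..., w_{q^s-1}} be an s-dimensional 𝔹-subspace of 𝔼 with s < a, and fix α* ∈ 𝔼. Define p_j(x) = ξ_j ∏_{i=1}^{q^s - 1}(x - (α* - wᵢ^{-1}ξ_j)) for j ∈ [a]. Then: (1) p_j(α*) = ξ_j^{q^s} · ∏_{i=1}^{q^s-1} wᵢ^{-1}, and consequently rank_𝔹({p₁(α*), ..., p_a(α*)}) = a; and (2) for any x ∈ 𝔼 with x ≠ α*, rank_𝔹({p₁(x), ..., p_a(x)}) ≤ a - s. -/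
open Finset Polynomial

section aux
variable {q : ℕ} {B : Type*} [Field B] [Fintype B]

lemma aux_poly_prod (hB : Fintype.card B = q) :
    ∏ b : B, (X - C b) = X ^ q - X := by
  classical
  have h1 : (1:ℕ) < q := hB ▸ Fintype.one_lt_card
  have hdeg : (X ^ q - X : B[X]).natDegree = q :=
    FiniteField.X_pow_card_sub_X_natDegree_eq B h1
  have hroots : (X ^ q - X : B[X]).roots = Finset.univ.val := by
    rw [← hB]; exact FiniteField.roots_X_pow_card_sub_X B
  have hmonic : (X ^ q - X : B[X]).Monic := by
    apply Polynomial.monic_X_pow_sub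
    rw [Polynomial.degree_X]
    exact_mod_cast h1
  have hcard : Multiset.card (X ^ q - X : B[X]).roots = (X ^ q - X : B[X]).natDegree := by
    rw [hroots, hdeg, ← hB]; rfl
  have := Polynomial.C_leadingCoeff_mul_prod_multiset_X_sub_C (p := (X ^ q - X : B[X])) hcard
  rw [hmonic.leadingCoeff, map_one, one_mul, hroots] at this
  rw [← this]
  rfl
end aux

section aux2
variable {q : ℕ} {B E : Type*} [Field B] [Field E] [Algebra B E] [Fintype B]

lemma aux_prod_eval (hB : Fintype.card B = q) (u : E) :
    ∏ b : B, (u - algebraMap B E b) = u ^ q - u := by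
  classical
  have h := congrArg (Polynomial.map (algebraMap B E)) (aux_poly_prod hB)
  have h2 := congrArg (Polynomial.eval u) h
  simpa [Polynomial.eval_prod] using h2

lemma aux_prod_theta (hB : Fintype.card B = q) (θ t : E) :
    ∏ b : B, (t - algebraMap B E b * θ) = t ^ q - θ ^ (q - 1) * t := by
  classical
  have h1 : (1:ℕ) < q := hB ▸ Fintype.one_lt_card
  rcases eq_or_ne θ 0 with rfl | hθ
  · simp [zero_pow (by omega : q - 1 ≠ 0), prod_const, hB, card_univ]
  · have key : ∀ b : B, t - algebraMap B E b * θ = θ * (t * θ⁻¹ - algebraMap B E b) := by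
      intro b; field_simp
    rw [Finset.prod_congr rfl (fun b _ => key b), Finset.prod_mul_distrib, Finset.prod_const,
      card_univ, hB, aux_prod_eval hB]
    have e1 : θ ^ q * (t * θ⁻¹) ^ q = t ^ q := by
      rw [mul_pow, inv_pow, mul_comm, mul_assoc, inv_mul_cancel₀ (pow_ne_zero _ hθ), mul_one]
    have e2 : θ ^ q * (t * θ⁻¹) = θ ^ (q - 1) * t := by
      rw [pow_sub₀ θ hθ (by omega : 1 ≤ q), pow_one]
      field_simp
    rw [mul_sub, e1, e2]
end aux2

section aux3
variable {q : ℕ} {B E : Type*} [Field B] [Field E] [Algebra B E] [Fintype B]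

lemma aux_frob (hB : Fintype.card B = q) (m : ℕ) :
    ∃ F : E →ₗ[B] E, ∀ z : E, F z = z ^ q ^ m := by
  classical
  haveI : CharP B (ringChar B) := ringChar.charP B
  obtain ⟨n, hp, hq⟩ := FiniteField.card B (ringChar B)
  haveI : CharP E (ringChar B) :=
    charP_of_injective_algebraMap (algebraMap B E).injective (ringChar B)
  haveI : Fact (Nat.Prime (ringChar B)) := ⟨hp⟩
  have hqm : q ^ m = ringChar B ^ ((n : ℕ) * m) := by
    rw [← hB, hq, pow_mul]
  refine ⟨{ toFun := fun z => z ^ q ^ m, map_add' := ?_, map_smul' := ?_ }, fun z => rfl⟩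
  · intro x y
    rw [hqm]
    exact add_pow_char_pow x y (ringChar B) (↑n * m)
  · intro b z
    simp only [RingHom.id_apply, Algebra.smul_def, mul_pow, ← map_pow]
    rw [← hB]
    rw [FiniteField.pow_card_pow]
end aux3

section aux4
variable {q : ℕ} {B E : Type*} [Field B] [Field E] [Algebra B E] [Fintype B] [Fintype E]

lemma aux_subspace_poly (hB : Fintype.card B = q) (V : Submodule B E) :
    ∃ L : E →ₗ[B] E, ∀ y : E, L y = ∏ u ∈ (Set.toFinite (V : Set E)).toFinset, (y - u) := by
  classical
  suffices h : ∀ t : Finset E, ∃ L : E →ₗ[B] E, ∀ y : E,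
      L y = ∏ u ∈ (Set.toFinite ((Submodule.span B (t : Set E)) : Set E)).toFinset, (y - u) by
    obtain ⟨L, hL⟩ := h (Set.toFinite (V : Set E)).toFinset
    have hspan : Submodule.span B (((Set.toFinite (V : Set E)).toFinset : Finset E) : Set E) = V := by
      rw [Set.Finite.coe_toFinset, Submodule.span_eq]
    refine ⟨L, fun y => ?_⟩
    rw [hL y]
    apply Finset.prod_congr _ (fun _ _ => rfl)
    ext z
    simp only [Set.Finite.mem_toFinset, SetLike.mem_coe, hspan]
  intro t
  induction t using Finset.induction_on with
  | empty =>
    refine ⟨LinearMap.id, fun y => ?_⟩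
    have h0 : (Set.toFinite ((Submodule.span B (((∅ : Finset E)) : Set E)) : Set E)).toFinset
        = {0} := by
      ext z
      simp only [Set.Finite.mem_toFinset, SetLike.mem_coe, Finset.coe_empty, Submodule.span_empty, Submodule.mem_bot, Finset.mem_singleton]
    rw [h0]
    simp
  | @insert v t hvt IH =>
    obtain ⟨L, hL⟩ := IH
    by_cases hvV : v ∈ Submodule.span B (t : Set E)
    · refine ⟨L, fun y => ?_⟩
      rw [hL y]
      apply Finset.prod_congr _ (fun _ _ => rfl)
      have hsp : Submodule.span B ((insert v t : Finset E) : Set E)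
          = Submodule.span B (t : Set E) := by
        rw [Finset.coe_insert, Submodule.span_insert_eq_span hvV]
      ext z
      simp only [Set.Finite.mem_toFinset, SetLike.mem_coe, hsp]
    · set Vt := Submodule.span B (t : Set E) with hVt
      set θ := L v with hθdef
      have hLzero : ∀ z, L z = 0 ↔ z ∈ Vt := by
        intro z
        rw [hL z, Finset.prod_eq_zero_iff]
        constructor
        · rintro ⟨u, hu, h0⟩
          rw [sub_eq_zero] at h0
          rw [h0]
          simpa [Set.Finite.mem_toFinset] using hu
        · intro hz
          exact ⟨z, by simpa [Set.Finite.mem_toFinset] using hz, sub_self z⟩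
      have hθ : θ ≠ 0 := fun h => hvV ((hLzero v).mp h)
      obtain ⟨F, hF⟩ := aux_frob (E := E) hB 1
      refine ⟨F ∘ₗ L - θ ^ (q - 1) • L, fun y => ?_⟩
      have hmem : ∀ z : E, z ∈ Submodule.span B ((insert v t : Finset E) : Set E) ↔
          ∃ b : B, ∃ u ∈ Vt, z = b • v + u := by
        intro z
        rw [Finset.coe_insert, Submodule.span_insert, Submodule.mem_sup]
        constructor
        · rintro ⟨y1, hy1, y2, hy2, rfl⟩
          obtain ⟨b, rfl⟩ := Submodule.mem_span_singleton.mp hy1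
          exact ⟨b, y2, hy2, rfl⟩
        · rintro ⟨b, u, hu, rfl⟩
          exact ⟨b • v, Submodule.mem_span_singleton.mpr ⟨b, rfl⟩, u, hu, rfl⟩
      have hfinset : (Set.toFinite
            ((Submodule.span B ((insert v t : Finset E) : Set E)) : Set E)).toFinset
          = Finset.univ.biUnion (fun b : B =>
              ((Set.toFinite (Vt : Set E)).toFinset).image (fun u => b • v + u)) := by
        ext z
        simp only [Set.Finite.mem_toFinset, SetLike.mem_coe, Finset.mem_biUnion,
          Finset.mem_image, Finset.mem_univ, true_and, hmem]
        constructor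
        · rintro ⟨b, u, hu, rfl⟩
          exact ⟨b, u, by simpa [Set.Finite.mem_toFinset] using hu, rfl⟩
        · rintro ⟨b, u, hu, rfl⟩
          exact ⟨b, u, by simpa [Set.Finite.mem_toFinset] using hu, rfl⟩
      have hdisj : Set.PairwiseDisjoint (↑(Finset.univ : Finset B)) (fun b : B =>
          ((Set.toFinite (Vt : Set E)).toFinset).image (fun u => b • v + u)) := by
        intro b _ b' _ hbb'
        simp only [Function.onFun]
        rw [Finset.disjoint_left]
        rintro z hz hz'
        simp only [Finset.mem_image, Set.Finite.mem_toFinset, SetLike.mem_coe] at hz hz'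
        obtain ⟨u, hu, rfl⟩ := hz
        obtain ⟨u', hu', he⟩ := hz'
        apply hvV
        have hsub : (b - b') • v = u' - u := by
          rw [sub_smul]
          have := he.symm
          rw [← sub_eq_zero] at this ⊢
          rw [← this]; ring
        have hbb : b - b' ≠ 0 := sub_ne_zero.mpr hbb'
        have : v = (b - b')⁻¹ • ((b - b') • v) := by
          rw [smul_smul, inv_mul_cancel₀ hbb, one_smul]
        rw [this, hsub]
        exact Vt.smul_mem _ (Vt.sub_mem hu' hu)
      rw [hfinset, Finset.prod_biUnion hdisj]
      have hinner : ∀ b : B, (∏ z ∈ ((Set.toFinite (Vt : Set E)).toFinset).image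
          (fun u => b • v + u), (y - z)) = L y - algebraMap B E b * θ := by
        intro b
        rw [Finset.prod_image (fun u _ u' _ h => by
          have := congrArg (fun z => z - b • v) h
          simpa using this)]
        have : ∀ u ∈ (Set.toFinite (Vt : Set E)).toFinset,
            y - (b • v + u) = (y - b • v) - u := by
          intro u _; ring
        rw [Finset.prod_congr rfl this, ← hL (y - b • v), map_sub, map_smul,
          Algebra.smul_def, ← hθdef]
      rw [Finset.prod_congr rfl (fun b _ => hinner b), aux_prod_theta hB θ (L y)]
      simp only [LinearMap.sub_apply, LinearMap.comp_apply, LinearMap.smul_apply,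
        smul_eq_mul, hF, pow_one]
end aux4




/-- for `p_j(x) = ξ_j ∏_{i=1}^{q^s-1} (x - (α* - wᵢ⁻¹ ξ_j))` with
`W = {w₀ = 0, w₁, …, w_{q^s-1}}` an `s`-dimensional `𝔹`-subspace of `𝔼 = GF(q^a)`:
(1) `p_j(α*) = ξ_j^{q^s} ∏ᵢ wᵢ⁻¹` and `{p_j(α*)}` has full rank `a` over `𝔹`;
(2) for `x ≠ α*`, `rank_𝔹{p_j(x)} ≤ a - s`. -/
theorem stmt12 (q a s : ℕ) [NeZero (q ^ s)] (B E : Type*) [Field B] [Field E]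
    [Algebra B E] [Fintype B] [Fintype E]
    (hB : Fintype.card B = q) (hE : Fintype.card E = q ^ a)
    (ξ : Module.Basis (Fin a) B E)
    (W : Submodule B E) (hWrank : Module.finrank B W = s) (hs : s < a)
    (w : Fin (q ^ s) → E) (hw0 : w 0 = 0) (hwinj : Function.Injective w)
    (hwmem : ∀ i, w i ∈ W) (hwsurj : ∀ x ∈ W, ∃ i, w i = x)
    (αs : E) (p : Fin a → E → E)
    (hp : ∀ j x, p j x = ξ j *
      ∏ i ∈ Finset.univ.filter (fun i : Fin (q ^ s) => i ≠ 0),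
        (x - (αs - (w i)⁻¹ * ξ j))) :
    (∀ j, p j αs = ξ j ^ q ^ s *
      ∏ i ∈ Finset.univ.filter (fun i : Fin (q ^ s) => i ≠ 0), (w i)⁻¹) ∧
    Module.finrank B (Submodule.span B (Set.range fun j => p j αs)) = a ∧
    ∀ x : E, x ≠ αs →
      Module.finrank B (Submodule.span B (Set.range fun j => p j x)) ≤ a - s := by
  classical
  haveI : FiniteDimensional B E := ξ.finiteDimensional_of_finite
  have hfin : Module.finrank B E = a := by
    rw [Module.finrank_eq_card_basis ξ, Fintype.card_fin]
  have hqs : 0 < q ^ s := Nat.pos_of_ne_zero (NeZero.ne _)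
  have hwne : ∀ i : Fin (q ^ s), i ≠ 0 → w i ≠ 0 := by
    intro i hi h
    exact hi (hwinj (h.trans hw0.symm))
  set c : E := ∏ i ∈ Finset.univ.filter (fun i : Fin (q ^ s) => i ≠ 0), (w i)⁻¹ with hc_def
  have hc : c ≠ 0 := by
    rw [hc_def]
    apply Finset.prod_ne_zero_iff.mpr
    intro i hi
    exact inv_ne_zero (hwne i (Finset.mem_filter.mp hi).2)
  have part1 : ∀ j, p j αs = ξ j ^ q ^ s * c := by
    intro j
    rw [hp j αs]
    have hstep : ∀ i ∈ Finset.univ.filter (fun i : Fin (q ^ s) => i ≠ 0),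
        αs - (αs - (w i)⁻¹ * ξ j) = (w i)⁻¹ * ξ j := by intro i _; ring
    rw [Finset.prod_congr rfl hstep, Finset.prod_mul_distrib, Finset.prod_const]
    have hcard : (Finset.univ.filter (fun i : Fin (q ^ s) => i ≠ 0)).card = q ^ s - 1 := by
      rw [Finset.filter_ne', Finset.card_erase_of_mem (Finset.mem_univ _), Finset.card_univ,
        Fintype.card_fin]
    rw [hcard, ← hc_def]
    have hpow : ξ j * ξ j ^ (q ^ s - 1) = ξ j ^ q ^ s := by
      conv_rhs => rw [show q ^ s = 1 + (q ^ s - 1) by omega]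
      rw [pow_add, pow_one]
    rw [← hpow]
    ring
  refine ⟨part1, ?_, ?_⟩
  · -- rank a
    obtain ⟨F, hF⟩ := aux_frob (E := E) hB s
    set G : E →ₗ[B] E := (LinearMap.mulRight B c).comp F with hG_def
    have hG : ∀ z, G z = z ^ q ^ s * c := by
      intro z; simp [hG_def, hF, LinearMap.mulRight_apply]
    have hGker : LinearMap.ker G = ⊥ := by
      rw [LinearMap.ker_eq_bot']
      intro m hm
      rw [hG] at hm
      rcases mul_eq_zero.mp hm with h | h
      · exact (pow_eq_zero_iff (by omega : q ^ s ≠ 0)).mp h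
      · exact absurd h hc
    have hli : LinearIndependent B (G ∘ ξ) := (ξ.linearIndependent).map' G hGker
    have heq1 : (fun j => p j αs) = G ∘ ξ := by
      funext j
      rw [part1 j, Function.comp_apply, hG]
    rw [heq1, finrank_span_eq_card hli, Fintype.card_fin]
  · -- rank ≤ a - s
    intro x hx
    set x' : E := αs - x with hx'def
    have hx' : x' ≠ 0 := sub_ne_zero.mpr (Ne.symm hx)
    let e : E ≃ₗ[B] E :=
      { toFun := fun z => x' * z
        invFun := fun z => x'⁻¹ * z
        map_add' := mul_add x'
        map_smul' := fun b z => by simp [Algebra.mul_smul_comm]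
        left_inv := fun z => by field_simp
        right_inv := fun z => by field_simp }
    set V : Submodule B E := Submodule.map e.toLinearMap W with hV_def
    have hVrank : Module.finrank B V = s := by
      rw [hV_def, LinearEquiv.finrank_map_eq]; exact hWrank
    obtain ⟨L, hL⟩ := aux_subspace_poly hB V
    set L' : E →ₗ[B] E := (LinearMap.mulLeft B c).comp L with hL'_def
    have hL'app : ∀ z, L' z = c * L z := fun z => by
      simp [hL'_def, LinearMap.mulLeft_apply]
    have hVker : V ≤ LinearMap.ker L' := by
      intro u hu
      rw [LinearMap.mem_ker, hL'app, hL u,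
        Finset.prod_eq_zero (by simpa [Set.Finite.mem_toFinset] using hu) (sub_self u), mul_zero]
    have hpx : ∀ j, p j x = L' (ξ j) := by
      intro j
      rw [hp j x]
      have hfac : ∀ i ∈ Finset.univ.filter (fun i : Fin (q ^ s) => i ≠ 0),
          x - (αs - (w i)⁻¹ * ξ j) = (w i)⁻¹ * (ξ j - x' * w i) := by
        intro i hi
        have hwi : w i ≠ 0 := hwne i (Finset.mem_filter.mp hi).2
        have h1 : (w i)⁻¹ * (x' * w i) = x' := by
          field_simp
        rw [mul_sub, h1, hx'def]
        ring
      rw [Finset.prod_congr rfl hfac, Finset.prod_mul_distrib, ← hc_def]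
      have huniv : ξ j * ∏ i ∈ Finset.univ.filter (fun i : Fin (q ^ s) => i ≠ 0),
          (ξ j - x' * w i) = ∏ i : Fin (q ^ s), (ξ j - x' * w i) := by
        rw [Finset.filter_ne']
        have hme := Finset.mul_prod_erase Finset.univ
          (fun i : Fin (q ^ s) => ξ j - x' * w i) (Finset.mem_univ 0)
        simp only [hw0, mul_zero, sub_zero] at hme
        exact hme
      have hreidx : ∏ i : Fin (q ^ s), (ξ j - x' * w i)
          = ∏ u ∈ (Set.toFinite (V : Set E)).toFinset, (ξ j - u) := by
        apply Finset.prod_bij (fun i _ => x' * w i)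
        · intro i _
          simp only [Set.Finite.mem_toFinset, SetLike.mem_coe, hV_def, Submodule.mem_map]
          exact ⟨w i, hwmem i, rfl⟩
        · intro i _ i' _ h
          exact hwinj (mul_left_cancel₀ hx' h)
        · intro u hu
          simp only [Set.Finite.mem_toFinset, SetLike.mem_coe, hV_def, Submodule.mem_map] at hu
          obtain ⟨z, hz, hzu⟩ := hu
          obtain ⟨i, rfl⟩ := hwsurj z hz
          exact ⟨i, Finset.mem_univ i, hzu⟩
        · intro i _; rfl
      rw [mul_left_comm, huniv, hreidx, hL'app, hL]
    have hspan_le : Submodule.span B (Set.range fun j => p j x) ≤ LinearMap.range L' := by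
      rw [Submodule.span_le]
      rintro _ ⟨j, rfl⟩
      exact ⟨ξ j, (hpx j).symm⟩
    have h1 : Module.finrank B (Submodule.span B (Set.range fun j => p j x))
        ≤ Module.finrank B (LinearMap.range L') := Submodule.finrank_mono hspan_le
    have h2 : Module.finrank B (LinearMap.range L') + Module.finrank B (LinearMap.ker L') = a := by
      rw [LinearMap.finrank_range_add_finrank_ker, hfin]
    have h3 : s ≤ Module.finrank B (LinearMap.ker L') := by
      rw [← hVrank]
      exact Submodule.finrank_mono hVker
    omega
end
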